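/- The function R(u;τ) := ∑_{ν ∈ 1/2+ℤ} (sgn(ν) − E((ν + Im(u)/Im(τ))·√(2 Im τ))) · (−1)^{ν−1/2} · e^{−πiν²τ} · e^{−2πiνu} satisfies R(−u; τ) = R(u; τ). -/

import Mathlib

open scoped BigOperators

/-- `E(t) = 2∫₀ᵗ e^{−πu²} du`. -/
noncomputable def Efun (t : ℝ) : ℝ := 2 * ∫ u in (0:ℝ)..t, Real.exp (-Real.pi * u ^ 2)

/-- Zwegers' function
`R(u;τ) = ∑_{ν ∈ 1/2+ℤ} (sgn(ν) − E((ν + Im u / Im τ)√(2 Im τ)))(−1)^{ν−1/2} e^{−πiν²τ} e^{−2πiνu}`,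
indexed by `ν = n + 1/2`, `n ∈ ℤ`. -/
noncomputable def Rfun (u τ : ℂ) : ℂ :=
  ∑' n : ℤ,
    ((Real.sign ((n : ℝ) + 1/2)
        - Efun (((n : ℝ) + 1/2 + u.im / τ.im) * Real.sqrt (2 * τ.im)) : ℝ) : ℂ)
      * (-1 : ℂ) ^ n
      * Complex.exp (-Real.pi * Complex.I * ((n : ℂ) + 1/2) ^ 2 * τ)
      * Complex.exp (-2 * Real.pi * Complex.I * ((n : ℂ) + 1/2) * u)

/-!
Reflecting the summation index `ν ↦ -ν` (that is `n ↦ -1 - n`) maps each term of `R(-u; τ)` to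
the corresponding term of `R(u; τ)`: the Gaussian `e^{-πiν²τ}` is even in `ν`, the factor
`e^{-2πiνu}` is invariant under `(ν, u) ↦ (-ν, -u)`, and the two remaining factors
`sgn(ν) - E(…)` (because `sgn` and `E` are odd) and `(-1)^{ν-1/2}` both change sign.
-/

lemma Efun_neg (t : ℝ) : Efun (-t) = -Efun t := by
  have h := intervalIntegral.integral_comp_neg (a := 0) (b := -t)
    (fun u => Real.exp (-Real.pi * u ^ 2))
  simp only [neg_sq, neg_zero, neg_neg] at h
  rw [Efun, Efun, h, intervalIntegral.integral_symm]
  ring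

lemma neg_one_zpow_neg_one_sub {α : Type*} [DivisionRing α] (n : ℤ) :
    (-1 : α) ^ (-1 - n) = -(-1 : α) ^ n := by
  rw [show -1 - n = -(1 + n) by ring, ← inv_zpow', inv_neg_one, zpow_add₀ (by simp), zpow_one,
    neg_one_mul]

lemma Int.cast_neg_one_sub_add_half {K : Type*} [Field K] [CharZero K] (n : ℤ) :
    ((-1 - n : ℤ) : K) + 1 / 2 = -((n : K) + 1 / 2) := by
  push_cast
  ring

noncomputable def Rsummand (u τ : ℂ) (n : ℤ) : ℂ :=
  ((Real.sign ((n : ℝ) + 1/2)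
      - Efun (((n : ℝ) + 1/2 + u.im / τ.im) * Real.sqrt (2 * τ.im)) : ℝ) : ℂ)
    * (-1 : ℂ) ^ n
    * Complex.exp (-Real.pi * Complex.I * ((n : ℂ) + 1/2) ^ 2 * τ)
    * Complex.exp (-2 * Real.pi * Complex.I * ((n : ℂ) + 1/2) * u)

lemma Rfun_eq_tsum_Rsummand (u τ : ℂ) : Rfun u τ = ∑' n : ℤ, Rsummand u τ n := rfl

lemma Rsummand_neg_neg_one_sub (u τ : ℂ) (n : ℤ) :
    Rsummand (-u) τ (-1 - n) = Rsummand u τ n := by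
  have hodd : Real.sign (((-1 - n : ℤ) : ℝ) + 1/2)
      - Efun ((((-1 - n : ℤ) : ℝ) + 1/2 + (-u).im / τ.im) * Real.sqrt (2 * τ.im))
      = -(Real.sign ((n : ℝ) + 1/2)
          - Efun (((n : ℝ) + 1/2 + u.im / τ.im) * Real.sqrt (2 * τ.im))) := by
    rw [Int.cast_neg_one_sub_add_half, Real.sign_neg, Complex.neg_im,
      show (-((n : ℝ) + 1/2) + -u.im / τ.im) * Real.sqrt (2 * τ.im)
        = -(((n : ℝ) + 1/2 + u.im / τ.im) * Real.sqrt (2 * τ.im)) by ring, Efun_neg]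
    ring
  rw [Rsummand, Rsummand, hodd, neg_one_zpow_neg_one_sub, Int.cast_neg_one_sub_add_half, neg_sq]
  simp only [Complex.ofReal_neg, mul_neg, neg_mul, neg_neg]

theorem Rfun_neg_general (τ u : ℂ) : Rfun (-u) τ = Rfun u τ := by
  rw [Rfun_eq_tsum_Rsummand, Rfun_eq_tsum_Rsummand, ← (Equiv.subLeft (-1 : ℤ)).tsum_eq]
  exact tsum_congr fun n => Rsummand_neg_neg_one_sub u τ n

/-- `R(−u; τ) = R(u; τ)`. -/
theorem Rfun_neg (τ u : ℂ) (hτ : 0 < τ.im) : Rfun (-u) τ = Rfun u τ :=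
  Rfun_neg_general τ u
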